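/- arXiv:2207.04187 — 6 statements merged into one kernel-verified Lean document; each statement's English description precedes it below -/
import Mathlib

section
/- Let μ be a measure on X, u : X → ℝ measurable, and q_1,…,q_N strictly positive measurable densities. For 1 ≤ n ≤ N and a ⊆ {1,…,N} with |a| = N−n+1, set ξ_a = (1/(N−n+1)) ∑_{γ∈a} q_γ. Then (1/C(N,n−1)) ∑_{|a|=N−n+1} ∫ u²/ξ_a dμ ≤ (1/N) ∑_{s=1}^N ∫ u²/q_s dμ. -/
open MeasureTheory

/-- Number of `m`-subsets of `s` containing a fixed element `γ ∈ s`. -/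
lemma count_mem_powersetCard {α : Type*} [DecidableEq α] (s : Finset α) (m : ℕ)
    (hm : 1 ≤ m) {γ : α} (hγ : γ ∈ s) :
    ((s.powersetCard m).filter (fun a => γ ∈ a)).card = (s.card - 1).choose (m - 1) := by
  rw [show s.card - 1 = (s.erase γ).card from (Finset.card_erase_of_mem hγ).symm,
    ← Finset.card_powersetCard (m - 1) (s.erase γ)]
  refine Finset.card_nbij' (fun a => a.erase γ) (fun b => insert γ b) ?_ ?_ ?_ ?_
  · intro a ha
    simp only [Finset.mem_coe, Finset.mem_filter, Finset.mem_powersetCard] at ha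
    obtain ⟨⟨hsub, hcard⟩, hmem⟩ := ha
    rw [Finset.mem_coe, Finset.mem_powersetCard]
    exact ⟨Finset.erase_subset_erase _ hsub, by rw [Finset.card_erase_of_mem hmem, hcard]⟩
  · intro b hb
    rw [Finset.mem_coe, Finset.mem_powersetCard] at hb
    obtain ⟨hsub, hcard⟩ := hb
    have hγb : γ ∉ b := fun h => (Finset.mem_erase.1 (hsub h)).1 rfl
    simp only [Finset.mem_coe, Finset.mem_filter, Finset.mem_powersetCard]
    refine ⟨⟨Finset.insert_subset hγ (hsub.trans (Finset.erase_subset _ _)), ?_⟩,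
      Finset.mem_insert_self _ _⟩
    rw [Finset.card_insert_of_notMem hγb, hcard]
    omega
  · intro a ha
    simp only [Finset.mem_coe, Finset.mem_filter] at ha
    exact Finset.insert_erase ha.2
  · intro b hb
    rw [Finset.mem_coe, Finset.mem_powersetCard] at hb
    have hγb : γ ∉ b := fun h => (Finset.mem_erase.1 (hb.1 h)).1 rfl
    exact Finset.erase_insert hγb

/-- Double counting: summing `f` over all `m`-subsets of `s`. -/
lemma sum_powersetCard_sum {α : Type*} [DecidableEq α] (s : Finset α) (m : ℕ)
    (hm : 1 ≤ m) (f : α → ℝ) :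
    ∑ a ∈ s.powersetCard m, ∑ γ ∈ a, f γ
      = ((s.card - 1).choose (m - 1) : ℝ) * ∑ γ ∈ s, f γ := by
  have h1 : ∀ a ∈ s.powersetCard m, ∑ γ ∈ a, f γ
      = ∑ γ ∈ s, if γ ∈ a then f γ else 0 := by
    intro a ha
    rw [Finset.mem_powersetCard] at ha
    rw [Finset.sum_ite_mem, Finset.inter_eq_right.2 ha.1]
  rw [Finset.sum_congr rfl h1, Finset.sum_comm]
  rw [Finset.mul_sum]
  refine Finset.sum_congr rfl fun γ hγ => ?_
  rw [← Finset.sum_filter, Finset.sum_const, count_mem_powersetCard s m hm hγ,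
    nsmul_eq_mul]

theorem stmt_7 {X : Type*} [MeasurableSpace X] (μ : Measure X) (N n : ℕ)
    (hn1 : 1 ≤ n) (hnN : n ≤ N)
    (u : X → ℝ) (hu : Measurable u)
    (q : ℕ → X → ℝ)
    (hqmeas : ∀ s ∈ Finset.range N, Measurable (q s))
    (hqpos : ∀ s ∈ Finset.range N, ∀ x, 0 < q s x)
    (hqint : ∀ s ∈ Finset.range N, ∫ x, q s x ∂μ = 1)
    (hints : ∀ s ∈ Finset.range N, Integrable (fun x => (u x) ^ 2 / q s x) μ)
    (hinta : ∀ a ∈ (Finset.range N).powersetCard (N - n + 1),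
      Integrable (fun x => (u x) ^ 2 / ((1 / ((N : ℝ) - n + 1)) * ∑ γ ∈ a, q γ x)) μ) :
    (1 / (Nat.choose N (n - 1) : ℝ)) *
        ∑ a ∈ (Finset.range N).powersetCard (N - n + 1),
          ∫ x, (u x) ^ 2 / ((1 / ((N : ℝ) - n + 1)) * ∑ γ ∈ a, q γ x) ∂μ
      ≤ (1 / (N : ℝ)) * ∑ s ∈ Finset.range N, ∫ x, (u x) ^ 2 / q s x ∂μ := by
  set m : ℕ := N - n + 1 with hm
  have hm1 : 1 ≤ m := by omega
  have hmN : m ≤ N := by omega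
  have hc : ((N : ℝ) - n + 1) = (m : ℝ) := by
    rw [hm]
    push_cast [Nat.cast_sub hnN]
    ring
  have hmpos : (0 : ℝ) < (m : ℝ) := by exact_mod_cast hm1
  -- Step 1: per-subset integral bound
  have step1 : ∀ a ∈ (Finset.range N).powersetCard m,
      ∫ x, (u x) ^ 2 / ((1 / ((N : ℝ) - n + 1)) * ∑ γ ∈ a, q γ x) ∂μ
        ≤ ∑ γ ∈ a, (1 / (m : ℝ)) * ∫ x, (u x) ^ 2 / q γ x ∂μ := by
    intro a ha
    obtain ⟨hsub, hcard⟩ := Finset.mem_powersetCard.1 ha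
    have hint2 : Integrable (fun x => ∑ γ ∈ a, (1 / (m : ℝ)) * ((u x) ^ 2 / q γ x)) μ :=
      integrable_finset_sum _ fun γ hγ => (hints γ (hsub hγ)).const_mul _
    have hmono : ∀ x, (u x) ^ 2 / ((1 / ((N : ℝ) - n + 1)) * ∑ γ ∈ a, q γ x)
        ≤ ∑ γ ∈ a, (1 / (m : ℝ)) * ((u x) ^ 2 / q γ x) := by
      intro x
      have hqx : ∀ γ ∈ a, 0 < q γ x := fun γ hγ => hqpos γ (hsub hγ) x
      have hQ : 0 < ∑ γ ∈ a, q γ x := Finset.sum_pos hqx (Finset.card_pos.1 (by rw [hcard]; omega))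
      have hcs : ((m : ℝ)) ^ 2 ≤ (∑ γ ∈ a, q γ x) * ∑ γ ∈ a, (q γ x)⁻¹ := by
        have := Finset.sum_sq_le_sum_mul_sum_of_sq_eq_mul a
          (r := fun _ => (1 : ℝ)) (f := fun γ => q γ x) (g := fun γ => (q γ x)⁻¹)
          (fun γ hγ => (hqx γ hγ).le) (fun γ hγ => (inv_nonneg.2 (hqx γ hγ).le))
          (fun γ hγ => by rw [one_pow, mul_inv_cancel₀ (hqx γ hγ).ne'])
        simpa [hcard] using this
      rw [hc]
      have lhs_eq : (u x) ^ 2 / ((1 / (m : ℝ)) * ∑ γ ∈ a, q γ x)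
          = (u x) ^ 2 * ((m : ℝ) / ∑ γ ∈ a, q γ x) := by
        field_simp
      have rhs_eq : ∑ γ ∈ a, (1 / (m : ℝ)) * ((u x) ^ 2 / q γ x)
          = (u x) ^ 2 * ((∑ γ ∈ a, (q γ x)⁻¹) / (m : ℝ)) := by
        have hterm : ∀ γ ∈ a, (1 / (m : ℝ)) * ((u x) ^ 2 / q γ x)
            = (u x) ^ 2 * ((q γ x)⁻¹ / (m : ℝ)) := fun γ hγ => by ring
        rw [Finset.sum_congr rfl hterm, ← Finset.mul_sum, ← Finset.sum_div]
      rw [lhs_eq, rhs_eq]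
      apply mul_le_mul_of_nonneg_left _ (sq_nonneg _)
      rw [div_le_div_iff₀ hQ hmpos]
      calc (m : ℝ) * (m : ℝ) = (m : ℝ) ^ 2 := (sq (m : ℝ)).symm
        _ ≤ (∑ γ ∈ a, q γ x) * ∑ γ ∈ a, (q γ x)⁻¹ := hcs
        _ = (∑ γ ∈ a, (q γ x)⁻¹) * (∑ γ ∈ a, q γ x) := mul_comm _ _
    calc ∫ x, (u x) ^ 2 / ((1 / ((N : ℝ) - n + 1)) * ∑ γ ∈ a, q γ x) ∂μ
        ≤ ∫ x, ∑ γ ∈ a, (1 / (m : ℝ)) * ((u x) ^ 2 / q γ x) ∂μ :=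
          integral_mono (hinta a ha) hint2 hmono
      _ = ∑ γ ∈ a, (1 / (m : ℝ)) * ∫ x, (u x) ^ 2 / q γ x ∂μ := by
          rw [integral_finset_sum _ fun γ hγ => (hints γ (hsub hγ)).const_mul _]
          exact Finset.sum_congr rfl fun γ hγ => integral_const_mul _ _
  -- Step 2: sum over all subsets
  have hC : (0 : ℝ) < (Nat.choose N (n - 1) : ℝ) := by
    exact_mod_cast Nat.choose_pos (by omega)
  have step2 : (1 / (Nat.choose N (n - 1) : ℝ)) *
      ∑ a ∈ (Finset.range N).powersetCard m,
        ∫ x, (u x) ^ 2 / ((1 / ((N : ℝ) - n + 1)) * ∑ γ ∈ a, q γ x) ∂μ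
      ≤ (1 / (Nat.choose N (n - 1) : ℝ)) *
        ∑ a ∈ (Finset.range N).powersetCard m,
          ∑ γ ∈ a, (1 / (m : ℝ)) * ∫ x, (u x) ^ 2 / q γ x ∂μ := by
    apply mul_le_mul_of_nonneg_left _ (by positivity)
    exact Finset.sum_le_sum step1
  refine step2.trans (le_of_eq ?_)
  rw [sum_powersetCard_sum _ m hm1, Finset.card_range]
  -- the combinatorial identity
  have hchoose : N * (N - 1).choose (N - n) = Nat.choose N (n - 1) * m := by
    have h1 : Nat.choose N (n - 1) = Nat.choose N m := by
      have : m = N - (n - 1) := by omega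
      rw [this, Nat.choose_symm (by omega)]
    have h2 : Nat.succ (N - 1) * (N - 1).choose (m - 1)
        = (N - 1 + 1).choose (m - 1 + 1) * (m - 1 + 1) := Nat.add_one_mul_choose_eq _ _
    have h3 : N - 1 + 1 = N := by omega
    have h4 : m - 1 + 1 = m := by omega
    have h5 : Nat.succ (N - 1) = N := by omega
    have h6 : m - 1 = N - n := by omega
    rw [h5, h3, h4, h6] at h2
    rw [h1, ← h2]
  have hN : (0 : ℝ) < (N : ℝ) := by exact_mod_cast (by omega : 0 < N)
  have hcast : (N : ℝ) * ((N - 1).choose (N - n) : ℝ)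
      = (Nat.choose N (n - 1) : ℝ) * (m : ℝ) := by exact_mod_cast hchoose
  rw [← Finset.mul_sum]
  set S := ∑ s ∈ Finset.range N, ∫ x, (u x) ^ 2 / q s x ∂μ
  have h6 : m - 1 = N - n := by omega
  rw [h6]
  field_simp
  linear_combination S * hcast
end

section
/- Let μ be a measure on X, u : X → ℝ measurable, and q_1,…,q_N strictly positive densities. For 1 ≤ n ≤ N, with ξ_a = (1/(N−n+1)) ∑_{γ∈a} q_γ over subsets a of cardinality N−n+1 and ψ = (1/N)∑_{s=1}^N q_s, one has (1/C(N,n−1)) ∑_{|a|=N−n+1} ∫ u²/ξ_a dμ ≥ ∫ u²/ψ dμ. -/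
open MeasureTheory

lemma count_mem_aux (N k : ℕ) (hk : 1 ≤ k) {γ : ℕ} (hγ : γ ∈ Finset.range N) :
    (((Finset.range N).powersetCard k).filter (fun a => γ ∈ a)).card
      = (N - 1).choose (k - 1) := by
  have h : (((Finset.range N).erase γ).powersetCard (k - 1)).card
      = (N - 1).choose (k - 1) := by
    rw [Finset.card_powersetCard, Finset.card_erase_of_mem hγ, Finset.card_range]
  rw [← h]
  refine Finset.card_nbij' (fun a => a.erase γ) (fun b => insert γ b) ?_ ?_ ?_ ?_
  · intro a ha
    rw [Finset.mem_coe, Finset.mem_filter, Finset.mem_powersetCard] at ha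
    rw [Finset.mem_coe, Finset.mem_powersetCard]
    exact ⟨Finset.erase_subset_erase _ ha.1.1,
      by rw [Finset.card_erase_of_mem ha.2, ha.1.2]⟩
  · intro b hb
    rw [Finset.mem_coe, Finset.mem_powersetCard] at hb
    have hγb : γ ∉ b := fun hmem => (Finset.mem_erase.1 (hb.1 hmem)).1 rfl
    rw [Finset.mem_coe, Finset.mem_filter, Finset.mem_powersetCard]
    refine ⟨⟨?_, ?_⟩, Finset.mem_insert_self _ _⟩
    · intro z hz
      rcases Finset.mem_insert.1 hz with h | h
      · exact h ▸ hγ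
      · exact (Finset.erase_subset _ _) (hb.1 h)
    · rw [Finset.card_insert_of_notMem hγb, hb.2]
      omega
  · intro a ha
    rw [Finset.mem_coe, Finset.mem_filter] at ha
    exact Finset.insert_erase ha.2
  · intro b hb
    rw [Finset.mem_coe, Finset.mem_powersetCard] at hb
    have hγb : γ ∉ b := fun hmem => (Finset.mem_erase.1 (hb.1 hmem)).1 rfl
    exact Finset.erase_insert hγb

lemma key_sum_aux (N k : ℕ) (hk : 1 ≤ k) (f : ℕ → ℝ) :
    ∑ a ∈ (Finset.range N).powersetCard k, ∑ γ ∈ a, f γ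
      = ((N - 1).choose (k - 1) : ℝ) * ∑ γ ∈ Finset.range N, f γ := by
  have h1 : ∀ a ∈ (Finset.range N).powersetCard k,
      ∑ γ ∈ a, f γ = ∑ γ ∈ Finset.range N, if γ ∈ a then f γ else 0 := by
    intro a ha
    rw [Finset.sum_ite_mem,
      Finset.inter_eq_right.2 (Finset.mem_powersetCard.1 ha).1]
  rw [Finset.sum_congr rfl h1, Finset.sum_comm, Finset.mul_sum]
  refine Finset.sum_congr rfl fun γ hγ => ?_
  rw [← Finset.sum_filter, Finset.sum_const, count_mem_aux N k hk hγ,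
    nsmul_eq_mul]

theorem stmt_8 {X : Type*} [MeasurableSpace X] (μ : Measure X) (N n : ℕ)
    (hn1 : 1 ≤ n) (hnN : n ≤ N)
    (u : X → ℝ) (hu : Measurable u)
    (q : ℕ → X → ℝ)
    (hqmeas : ∀ s ∈ Finset.range N, Measurable (q s))
    (hqpos : ∀ s ∈ Finset.range N, ∀ x, 0 < q s x)
    (hqint : ∀ s ∈ Finset.range N, ∫ x, q s x ∂μ = 1)
    (hintψ : Integrable
      (fun x => (u x) ^ 2 / ((1 / (N : ℝ)) * ∑ s ∈ Finset.range N, q s x)) μ)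
    (hinta : ∀ a ∈ (Finset.range N).powersetCard (N - n + 1),
      Integrable (fun x => (u x) ^ 2 / ((1 / ((N : ℝ) - n + 1)) * ∑ γ ∈ a, q γ x)) μ) :
    (1 / (Nat.choose N (n - 1) : ℝ)) *
        ∑ a ∈ (Finset.range N).powersetCard (N - n + 1),
          ∫ x, (u x) ^ 2 / ((1 / ((N : ℝ) - n + 1)) * ∑ γ ∈ a, q γ x) ∂μ
      ≥ ∫ x, (u x) ^ 2 / ((1 / (N : ℝ)) * ∑ s ∈ Finset.range N, q s x) ∂μ := by
  set k : ℕ := N - n + 1 with hk_def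
  set P := (Finset.range N).powersetCard k with hP_def
  set C : ℕ := N.choose (n - 1) with hC_def
  set c : ℕ := (N - 1).choose (k - 1) with hc_def
  have hk1 : 1 ≤ k := by omega
  have hkN : k ≤ N := by omega
  have hN1 : 1 ≤ N := le_trans hn1 hnN
  have hCpos : 0 < C := Nat.choose_pos (by omega)
  have hcpos : 0 < c := Nat.choose_pos (by omega)
  have hCcard : P.card = C := by
    rw [hP_def, Finset.card_powersetCard, Finset.card_range, hC_def]
    rw [show n - 1 = N - k by omega]
    exact (Nat.choose_symm hkN).symm
  -- key binomial identity : k * C = N * c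
  have hbinom : k * C = N * c := by
    have h1 : C = N.choose k := by
      rw [hC_def, show n - 1 = N - k by omega]
      exact Nat.choose_symm hkN
    have h2 : N.choose k * k = N * (N - 1).choose (k - 1) := by
      have h3 := (Nat.add_one_mul_choose_eq (N - 1) (k - 1)).symm
      rwa [show N - 1 + 1 = N by omega,
        show k - 1 + 1 = k by omega] at h3
    rw [h1, mul_comm, h2]
  -- Pointwise inequality
  have hpt : ∀ x,
      (u x) ^ 2 / ((1 / (N : ℝ)) * ∑ s ∈ Finset.range N, q s x)
        ≤ (1 / (C : ℝ)) * ∑ a ∈ P,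
            (u x) ^ 2 / ((1 / ((N : ℝ) - n + 1)) * ∑ γ ∈ a, q γ x) := by
    intro x
    have hcastk : ((N : ℝ) - n + 1) = (k : ℝ) := by
      rw [hk_def]
      push_cast [Nat.cast_sub hnN]
      ring
    set S : ℝ := ∑ s ∈ Finset.range N, q s x with hS_def
    have hSpos : 0 < S := by
      apply Finset.sum_pos (fun s hs => hqpos s hs x)
      exact ⟨0, Finset.mem_range.2 (by omega)⟩
    have hTpos : ∀ a ∈ P, 0 < ∑ γ ∈ a, q γ x := by
      intro a ha
      rw [hP_def, Finset.mem_powersetCard] at ha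
      apply Finset.sum_pos (fun γ hγ => hqpos γ (ha.1 hγ) x)
      exact Finset.card_pos.1 (by omega)
    -- Cauchy-Schwarz (Sedrakyan with f = 1)
    have hCS : ((C : ℝ)) ^ 2 / (∑ a ∈ P, ∑ γ ∈ a, q γ x)
        ≤ ∑ a ∈ P, 1 / (∑ γ ∈ a, q γ x) := by
      have := Finset.sq_sum_div_le_sum_sq_div P (fun _ => (1 : ℝ)) hTpos
      simpa [hCcard, one_pow] using this
    have hsum : ∑ a ∈ P, ∑ γ ∈ a, q γ x = (c : ℝ) * S := by
      rw [hP_def, key_sum_aux N k hk1, hS_def, hc_def]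
    rw [hsum] at hCS
    -- rewrite both sides
    have hrhs : (1 / (C : ℝ)) * ∑ a ∈ P,
        (u x) ^ 2 / ((1 / ((N : ℝ) - n + 1)) * ∑ γ ∈ a, q γ x)
        = (u x) ^ 2 * (k : ℝ) / (C : ℝ) * ∑ a ∈ P, 1 / (∑ γ ∈ a, q γ x) := by
      rw [Finset.mul_sum, Finset.mul_sum]
      refine Finset.sum_congr rfl fun a ha => ?_
      have hT := hTpos a ha
      rw [hcastk]
      field_simp
    rw [hrhs]
    calc (u x) ^ 2 / ((1 / (N : ℝ)) * S)
        = (u x) ^ 2 * (k : ℝ) / (C : ℝ) * ((C : ℝ) ^ 2 / ((c : ℝ) * S)) := by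
          have hkC : (k : ℝ) * (C : ℝ) = (N : ℝ) * (c : ℝ) := by
            exact_mod_cast congrArg (Nat.cast : ℕ → ℝ) hbinom
          have hC0 : (C : ℝ) ≠ 0 := Nat.cast_ne_zero.2 hCpos.ne'
          have hc0 : (c : ℝ) ≠ 0 := Nat.cast_ne_zero.2 hcpos.ne'
          have hN0 : (N : ℝ) ≠ 0 := Nat.cast_ne_zero.2 (by omega)
          field_simp
          linear_combination (-(u x ^ 2)) * hkC
      _ ≤ (u x) ^ 2 * (k : ℝ) / (C : ℝ) * ∑ a ∈ P, 1 / (∑ γ ∈ a, q γ x) := by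
          apply mul_le_mul_of_nonneg_left hCS
          positivity
  -- move constant and sum inside the integral
  have hIsum : Integrable (fun x => ∑ a ∈ P,
      (u x) ^ 2 / ((1 / ((N : ℝ) - n + 1)) * ∑ γ ∈ a, q γ x)) μ :=
    integrable_finset_sum P hinta
  have heq : (1 / (C : ℝ)) * ∑ a ∈ P,
        ∫ x, (u x) ^ 2 / ((1 / ((N : ℝ) - n + 1)) * ∑ γ ∈ a, q γ x) ∂μ
      = ∫ x, (1 / (C : ℝ)) * ∑ a ∈ P,
          (u x) ^ 2 / ((1 / ((N : ℝ) - n + 1)) * ∑ γ ∈ a, q γ x) ∂μ := by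
    rw [integral_const_mul, ← integral_finset_sum P hinta]
  rw [ge_iff_le, heq]
  exact integral_mono hintψ (hIsum.const_mul _) hpt
end

section
/- Let μ be a measure on X, u measurable, q_1,…,q_N strictly positive densities integrating to 1, I = ∫ u dμ, and ψ = (1/N)∑ q_n. Define V1 = (1/N²)∑_{n=1}^N ∫ u²/q_n dμ − (1/N)I², V2 = (1/N²)∑_{n=1}^N (1/C(N,n−1)) ∑_{|a|=N−n+1} ∫ u²/ξ_a dμ − (1/N)I², and V3 = (1/N)∫ u²/ψ dμ − (1/N²)∑_{n=1}^N (∫ (u/ψ) q_n dμ)², where ξ_a = (1/(N−n+1))∑_{γ∈a} q_γ. Then V1 ≥ V2 ≥ V3. -/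
open MeasureTheory Finset

lemma amhm_aux {ι : Type*} (s : Finset ι) (t : ι → ℝ) (ht : ∀ i ∈ s, 0 < t i) :
    (s.card : ℝ) ^ 2 ≤ (∑ i ∈ s, t i) * ∑ i ∈ s, (t i)⁻¹ := by
  have h := Finset.sum_mul_sq_le_sq_mul_sq s (fun i => Real.sqrt (t i))
    (fun i => (Real.sqrt (t i))⁻¹)
  have h1 : ∑ i ∈ s, Real.sqrt (t i) * (Real.sqrt (t i))⁻¹ = (s.card : ℝ) := by
    rw [Finset.sum_congr rfl (fun i hi => mul_inv_cancel₀
      (ne_of_gt (Real.sqrt_pos.2 (ht i hi)))), Finset.sum_const, nsmul_eq_mul, mul_one]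
  have h2 : ∑ i ∈ s, Real.sqrt (t i) ^ 2 = ∑ i ∈ s, t i :=
    Finset.sum_congr rfl fun i hi => Real.sq_sqrt (ht i hi).le
  have h3 : ∑ i ∈ s, (Real.sqrt (t i))⁻¹ ^ 2 = ∑ i ∈ s, (t i)⁻¹ :=
    Finset.sum_congr rfl fun i hi => by
      rw [inv_pow, Real.sq_sqrt (ht i hi).le]
  rw [h1, h2, h3] at h; exact h

/-- Counting lemma: each γ lies in C(N-1, m-1) subsets of size m. -/
lemma count_aux (N m : ℕ) (hm : 1 ≤ m) (f : ℕ → ℝ) :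
    ∑ a ∈ (Finset.range N).powersetCard m, ∑ γ ∈ a, f γ
      = ((N - 1).choose (m - 1) : ℝ) * ∑ γ ∈ Finset.range N, f γ := by
  have key : ∀ γ ∈ Finset.range N,
      (((Finset.range N).powersetCard m).filter (fun a => γ ∈ a)).card
        = (N - 1).choose (m - 1) := by
    intro γ hγ
    have : (((Finset.range N).powersetCard m).filter (fun a => γ ∈ a)).card
        = (((Finset.range N).erase γ).powersetCard (m - 1)).card := by
      refine Finset.card_bij' (fun a _ => a.erase γ) (fun b _ => insert γ b)
        ?_ ?_ ?_ ?_
      · intro a ha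
        simp only [Finset.mem_filter, Finset.mem_powersetCard] at ha
        obtain ⟨⟨hsub, hcard⟩, hmem⟩ := ha
        rw [Finset.mem_powersetCard]
        constructor
        · exact Finset.erase_subset_erase γ hsub
        · rw [Finset.card_erase_of_mem hmem, hcard]
      · intro b hb
        rw [Finset.mem_powersetCard] at hb
        obtain ⟨hsub, hcard⟩ := hb
        have hγb : γ ∉ b := fun h => (Finset.mem_erase.1 (hsub h)).1 rfl
        simp only [Finset.mem_filter, Finset.mem_powersetCard]
        refine ⟨⟨?_, ?_⟩, Finset.mem_insert_self γ b⟩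
        · exact Finset.insert_subset hγ (hsub.trans (Finset.erase_subset γ _))
        · rw [Finset.card_insert_of_notMem hγb, hcard, Nat.sub_add_cancel hm]
      · intro a ha
        simp only [Finset.mem_filter] at ha
        exact Finset.insert_erase ha.2
      · intro b hb
        rw [Finset.mem_powersetCard] at hb
        have hγb : γ ∉ b := fun h => (Finset.mem_erase.1 (hb.1 h)).1 rfl
        exact Finset.erase_insert hγb
    rw [this, Finset.card_powersetCard, Finset.card_erase_of_mem hγ, Finset.card_range]
  calc ∑ a ∈ (Finset.range N).powersetCard m, ∑ γ ∈ a, f γ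
      = ∑ a ∈ (Finset.range N).powersetCard m, ∑ γ ∈ Finset.range N,
          if γ ∈ a then f γ else 0 := by
        refine Finset.sum_congr rfl fun a ha => ?_
        rw [Finset.sum_ite_mem, Finset.inter_eq_right.2 (Finset.mem_powersetCard.1 ha).1]
    _ = ∑ γ ∈ Finset.range N, ∑ a ∈ (Finset.range N).powersetCard m,
          if γ ∈ a then f γ else 0 := Finset.sum_comm
    _ = ∑ γ ∈ Finset.range N, ((N - 1).choose (m - 1) : ℝ) * f γ := by
        refine Finset.sum_congr rfl fun γ hγ => ?_
        rw [Finset.sum_ite, Finset.sum_const_zero, add_zero, Finset.sum_const,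
          nsmul_eq_mul, key γ hγ]
    _ = ((N - 1).choose (m - 1) : ℝ) * ∑ γ ∈ Finset.range N, f γ := by
        rw [Finset.mul_sum]

set_option maxHeartbeats 1000000

/-- Theorem 2 of the paper: var(Î_N1) ≥ var(Î_N2) ≥ var(Î_N3). -/
theorem stmt_9 {X : Type*} [MeasurableSpace X] (μ : Measure X) (N : ℕ) (hN : 1 ≤ N)
    (u : X → ℝ) (hu : Measurable u) (huint : Integrable u μ)
    (q : ℕ → X → ℝ)
    (hqmeas : ∀ s ∈ Finset.range N, Measurable (q s))
    (hqpos : ∀ s ∈ Finset.range N, ∀ x, 0 < q s x)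
    (hqint : ∀ s ∈ Finset.range N, ∫ x, q s x ∂μ = 1)
    (I : ℝ) (hI : I = ∫ x, u x ∂μ)
    (ψ : X → ℝ) (hψ : ψ = fun x => (1 / (N : ℝ)) * ∑ s ∈ Finset.range N, q s x)
    (ξ : ℕ → Finset ℕ → X → ℝ)
    (hξ : ∀ n a, ξ n a = fun x => (1 / ((N : ℝ) - n + 1)) * ∑ γ ∈ a, q γ x)
    (hints : ∀ s ∈ Finset.range N, Integrable (fun x => (u x) ^ 2 / q s x) μ)
    (hintψ : Integrable (fun x => (u x) ^ 2 / ψ x) μ)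
    (hintuψ : ∀ s ∈ Finset.range N, Integrable (fun x => (u x / ψ x) * q s x) μ)
    (hinta : ∀ n ∈ Finset.Icc 1 N, ∀ a ∈ (Finset.range N).powersetCard (N - n + 1),
      Integrable (fun x => (u x) ^ 2 / ξ n a x) μ)
    (V1 V2 V3 : ℝ)
    (hV1 : V1 = (1 / (N : ℝ) ^ 2) *
        (∑ s ∈ Finset.range N, ∫ x, (u x) ^ 2 / q s x ∂μ) - (1 / (N : ℝ)) * I ^ 2)
    (hV2 : V2 = (1 / (N : ℝ) ^ 2) *
        (∑ n ∈ Finset.Icc 1 N, (1 / (Nat.choose N (n - 1) : ℝ)) *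
          ∑ a ∈ (Finset.range N).powersetCard (N - n + 1), ∫ x, (u x) ^ 2 / ξ n a x ∂μ)
        - (1 / (N : ℝ)) * I ^ 2)
    (hV3 : V3 = (1 / (N : ℝ)) * ∫ x, (u x) ^ 2 / ψ x ∂μ
        - (1 / (N : ℝ) ^ 2) *
          ∑ s ∈ Finset.range N, (∫ x, (u x / ψ x) * q s x ∂μ) ^ 2) :
    V1 ≥ V2 ∧ V2 ≥ V3 := by
  have hN0 : (0 : ℝ) < N := by exact_mod_cast hN
  have hNne : (N : ℝ) ≠ 0 := ne_of_gt hN0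
  have hψpos : ∀ x, 0 < ψ x := by
    intro x
    rw [hψ]
    exact mul_pos (by positivity)
      (Finset.sum_pos (fun s hs => hqpos s hs x)
        (Finset.nonempty_range_iff.2 (by omega)))
  -- notation
  set A : ℕ → ℝ := fun s => ∫ x, (u x) ^ 2 / q s x ∂μ with hA
  set J : ℝ := ∫ x, (u x) ^ 2 / ψ x ∂μ with hJ
  set B : ℕ → ℝ := fun n => ∑ a ∈ (Finset.range N).powersetCard (N - n + 1),
    ∫ x, (u x) ^ 2 / ξ n a x ∂μ with hB
  -- per-n facts
  have main : ∀ n ∈ Finset.Icc 1 N,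
      (1 / (Nat.choose N (n - 1) : ℝ)) * B n ≤ (1 / N) * ∑ s ∈ Finset.range N, A s
      ∧ J ≤ (1 / (Nat.choose N (n - 1) : ℝ)) * B n := by
    intro n hn
    rw [Finset.mem_Icc] at hn
    obtain ⟨hn1, hnN⟩ := hn
    set m : ℕ := N - n + 1 with hm
    have hm1 : 1 ≤ m := by omega
    have hmN : m ≤ N := by omega
    have hm0 : (0 : ℝ) < (m : ℝ) := by exact_mod_cast hm1
    have hcast : ((N : ℝ) - n + 1) = (m : ℝ) := by
      rw [hm, Nat.cast_add, Nat.cast_sub hnN, Nat.cast_one]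
    have hchoose : Nat.choose N (n - 1) = Nat.choose N m := by
      have : m = N - (n - 1) := by omega
      rw [this, Nat.choose_symm (by omega)]
    have hC0 : 0 < Nat.choose N m := Nat.choose_pos hmN
    have hC0' : (0 : ℝ) < (Nat.choose N m : ℝ) := by exact_mod_cast hC0
    have hKC : (N : ℝ) * ((N - 1).choose (m - 1) : ℝ) = (m : ℝ) * (Nat.choose N m : ℝ) := by
      have h := Nat.add_one_mul_choose_eq (N - 1) (m - 1)
      rw [Nat.sub_add_cancel hN,
        Nat.sub_add_cancel hm1] at h
      exact_mod_cast by rw [h]; ring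
    have hmm : ((N - 1).choose (m - 1) : ℝ) = ((N - 1).choose (N - n) : ℝ) := by
      norm_num [show m - 1 = N - n from by omega]
    rw [hmm] at hKC
    set P := (Finset.range N).powersetCard m with hP
    have hcardP : P.card = Nat.choose N m := by
      rw [hP, Finset.card_powersetCard, Finset.card_range]
    -- positivity of ξ
    have hξpos : ∀ a ∈ P, ∀ x, 0 < ξ n a x := by
      intro a ha x
      obtain ⟨hsub, hcard⟩ := Finset.mem_powersetCard.1 ha
      simp only [hξ]
      refine mul_pos ?_ (Finset.sum_pos (fun γ hγ => hqpos γ (hsub hγ) x) ?_)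
      · rw [hcast]; positivity
      · exact Finset.card_pos.1 (by omega)
    -- pointwise 1
    have hpt1 : ∀ a ∈ P, ∀ x, (u x) ^ 2 / ξ n a x
        ≤ (1 / (m : ℝ)) * ∑ γ ∈ a, (u x) ^ 2 / q γ x := by
      intro a ha x
      obtain ⟨hsub, hcard⟩ := Finset.mem_powersetCard.1 ha
      have hqγ : ∀ γ ∈ a, 0 < q γ x := fun γ hγ => hqpos γ (hsub hγ) x
      have hTpos : 0 < ∑ γ ∈ a, q γ x :=
        Finset.sum_pos hqγ (Finset.card_pos.1 (by omega))
      have hamhm := amhm_aux a (fun γ => q γ x) hqγ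
      rw [hcard] at hamhm
      have step : (m : ℝ) / (∑ γ ∈ a, q γ x)
          ≤ (1 / m) * ∑ γ ∈ a, (q γ x)⁻¹ := by
        rw [one_div, inv_mul_eq_div, div_le_div_iff₀ hTpos hm0]
        nlinarith [hamhm]
      simp only [hξ, hcast]
      calc (u x) ^ 2 / ((1 / (m : ℝ)) * ∑ γ ∈ a, q γ x)
          = (u x) ^ 2 * ((m : ℝ) / ∑ γ ∈ a, q γ x) := by
            rw [one_div, inv_mul_eq_div, div_div_eq_mul_div, mul_div_assoc]
        _ ≤ (u x) ^ 2 * ((1 / m) * ∑ γ ∈ a, (q γ x)⁻¹) :=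
            mul_le_mul_of_nonneg_left step (sq_nonneg _)
        _ = (1 / (m : ℝ)) * ∑ γ ∈ a, (u x) ^ 2 / q γ x := by
            simp only [div_eq_mul_inv, Finset.mul_sum]
            refine Finset.sum_congr rfl fun γ _ => ?_
            ring
    -- integrability of majorant
    have hintR : ∀ a ∈ P, Integrable
        (fun x => (1 / (m : ℝ)) * ∑ γ ∈ a, (u x) ^ 2 / q γ x) μ := by
      intro a ha
      obtain ⟨hsub, _⟩ := Finset.mem_powersetCard.1 ha
      exact (integrable_finset_sum a fun γ hγ => hints γ (hsub hγ)).const_mul _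
    have hintξ : ∀ a ∈ P, Integrable (fun x => (u x) ^ 2 / ξ n a x) μ :=
      fun a ha => hinta n (Finset.mem_Icc.2 ⟨hn1, hnN⟩) a ha
    -- step 1 : integral bound per a
    have step1 : ∀ a ∈ P, ∫ x, (u x) ^ 2 / ξ n a x ∂μ
        ≤ (1 / (m : ℝ)) * ∑ γ ∈ a, A γ := by
      intro a ha
      obtain ⟨hsub, _⟩ := Finset.mem_powersetCard.1 ha
      calc ∫ x, (u x) ^ 2 / ξ n a x ∂μ
          ≤ ∫ x, (1 / (m : ℝ)) * ∑ γ ∈ a, (u x) ^ 2 / q γ x ∂μ :=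
            integral_mono (hintξ a ha) (hintR a ha) (fun x => hpt1 a ha x)
        _ = (1 / (m : ℝ)) * ∑ γ ∈ a, A γ := by
            rw [integral_const_mul, integral_finset_sum a fun γ hγ => hints γ (hsub hγ)]
    -- KEY1
    have key1 : (1 / (Nat.choose N (n - 1) : ℝ)) * B n
        ≤ (1 / N) * ∑ s ∈ Finset.range N, A s := by
      have hBle : B n ≤ (1 / (m : ℝ)) * (((N - 1).choose (N - n) : ℝ) *
          ∑ γ ∈ Finset.range N, A γ) := by
        calc B n ≤ ∑ a ∈ P, (1 / (m : ℝ)) * ∑ γ ∈ a, A γ :=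
              Finset.sum_le_sum step1
          _ = (1 / (m : ℝ)) * ∑ a ∈ P, ∑ γ ∈ a, A γ := by rw [← Finset.mul_sum]
          _ = _ := by rw [count_aux N m hm1 A, hmm]
      rw [hchoose]
      calc (1 / (Nat.choose N m : ℝ)) * B n
          ≤ (1 / (Nat.choose N m : ℝ)) * ((1 / (m : ℝ)) *
              (((N - 1).choose (N - n) : ℝ) * ∑ γ ∈ Finset.range N, A γ)) :=
            mul_le_mul_of_nonneg_left hBle (by positivity)
        _ = (1 / N) * ∑ s ∈ Finset.range N, A s := by
            field_simp
            linear_combination (∑ γ ∈ Finset.range N, A γ) * hKC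
    -- pointwise 2
    have hpt2 : ∀ x, (u x) ^ 2 / ψ x
        ≤ (1 / (Nat.choose N m : ℝ)) * ∑ a ∈ P, (u x) ^ 2 / ξ n a x := by
      intro x
      have hξposx : ∀ a ∈ P, 0 < ξ n a x := fun a ha => hξpos a ha x
      have hamhm := amhm_aux P (fun a => ξ n a x) hξposx
      rw [hcardP] at hamhm
      have hsum : ∑ a ∈ P, ξ n a x = (Nat.choose N m : ℝ) * ψ x := by
        simp only [hξ, hcast, hψ]
        rw [← Finset.mul_sum, count_aux N m hm1 (fun γ => q γ x), hmm]
        field_simp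
        linear_combination (∑ γ ∈ Finset.range N, q γ x) * hKC
      rw [hsum] at hamhm
      have h5 : (Nat.choose N m : ℝ) ≤ ψ x * ∑ a ∈ P, (ξ n a x)⁻¹ := by
        nlinarith [hamhm, hC0']
      have h6 : (ψ x)⁻¹ ≤ (1 / (Nat.choose N m : ℝ)) * ∑ a ∈ P, (ξ n a x)⁻¹ := by
        rw [inv_eq_one_div, div_le_iff₀ (hψpos x)]
        have hCinv : (1 / (Nat.choose N m : ℝ)) * (Nat.choose N m : ℝ) = 1 := by
          field_simp
        nlinarith [h5, hCinv, one_div_pos.2 hC0']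
      calc (u x) ^ 2 / ψ x = (u x) ^ 2 * (ψ x)⁻¹ := div_eq_mul_inv _ _
        _ ≤ (u x) ^ 2 * ((1 / (Nat.choose N m : ℝ)) * ∑ a ∈ P, (ξ n a x)⁻¹) :=
            mul_le_mul_of_nonneg_left h6 (sq_nonneg _)
        _ = (1 / (Nat.choose N m : ℝ)) * ∑ a ∈ P, (u x) ^ 2 / ξ n a x := by
            simp only [div_eq_mul_inv, Finset.mul_sum]
            refine Finset.sum_congr rfl fun a _ => ?_
            ring
    -- KEY2
    have key2 : J ≤ (1 / (Nat.choose N (n - 1) : ℝ)) * B n := by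
      rw [hchoose]
      calc J ≤ ∫ x, (1 / (Nat.choose N m : ℝ)) * ∑ a ∈ P, (u x) ^ 2 / ξ n a x ∂μ := by
            refine integral_mono hintψ ?_ (fun x => hpt2 x)
            exact (integrable_finset_sum P hintξ).const_mul _
        _ = (1 / (Nat.choose N m : ℝ)) * B n := by
            rw [integral_const_mul, integral_finset_sum P hintξ]
    exact ⟨key1, key2⟩
  -- assemble sums over n
  have hcardIcc : (Finset.Icc 1 N).card = N := by rw [Nat.card_Icc]; omega
  set S2 : ℝ := ∑ n ∈ Finset.Icc 1 N, (1 / (Nat.choose N (n - 1) : ℝ)) * B n with hS2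
  have hS2le : S2 ≤ ∑ s ∈ Finset.range N, A s := by
    calc S2 ≤ ∑ n ∈ Finset.Icc 1 N, (1 / (N : ℝ)) * ∑ s ∈ Finset.range N, A s :=
          Finset.sum_le_sum fun n hn => (main n hn).1
      _ = (N : ℝ) * ((1 / (N : ℝ)) * ∑ s ∈ Finset.range N, A s) := by
          rw [Finset.sum_const, hcardIcc, nsmul_eq_mul]
      _ = ∑ s ∈ Finset.range N, A s := by field_simp
  have hS2ge : (N : ℝ) * J ≤ S2 := by
    calc (N : ℝ) * J = ∑ n ∈ Finset.Icc 1 N, J := by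
          rw [Finset.sum_const, hcardIcc, nsmul_eq_mul]
      _ ≤ S2 := Finset.sum_le_sum fun n hn => (main n hn).2
  -- Cauchy-Schwarz part for V3
  set b : ℕ → ℝ := fun s => ∫ x, (u x / ψ x) * q s x ∂μ with hb
  have hbsum : ∑ s ∈ Finset.range N, b s = (N : ℝ) * I := by
    have hfun : (fun x => ∑ s ∈ Finset.range N, (u x / ψ x) * q s x)
        = fun x => (N : ℝ) * u x := by
      funext x
      have hSψ : ∑ s ∈ Finset.range N, q s x = (N : ℝ) * ψ x := by
        rw [hψ]; field_simp
      rw [← Finset.mul_sum, hSψ]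
      field_simp [ne_of_gt (hψpos x)]
    calc ∑ s ∈ Finset.range N, b s
        = ∫ x, ∑ s ∈ Finset.range N, (u x / ψ x) * q s x ∂μ :=
          (integral_finset_sum _ hintuψ).symm
      _ = ∫ x, (N : ℝ) * u x ∂μ := by rw [hfun]
      _ = (N : ℝ) * I := by rw [integral_const_mul, hI]
  have hcs : (N : ℝ) * I ^ 2 ≤ ∑ s ∈ Finset.range N, (b s) ^ 2 := by
    have h := sq_sum_le_card_mul_sum_sq (s := Finset.range N) (f := b)
    rw [hbsum, Finset.card_range] at h
    nlinarith [h, hN0]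
  -- conclude
  constructor
  · rw [hV1, hV2]
    have := mul_le_mul_of_nonneg_left hS2le
      (show (0 : ℝ) ≤ 1 / (N : ℝ) ^ 2 by positivity)
    linarith
  · rw [hV2, hV3]
    have h1 := mul_le_mul_of_nonneg_left hS2ge
      (show (0 : ℝ) ≤ 1 / (N : ℝ) ^ 2 by positivity)
    have h2 := mul_le_mul_of_nonneg_left hcs
      (show (0 : ℝ) ≤ 1 / (N : ℝ) ^ 2 by positivity)
    have e1 : (1 / (N : ℝ) ^ 2) * ((N : ℝ) * J) = (1 / N) * J := by
      field_simp
    have e2 : (1 / (N : ℝ) ^ 2) * ((N : ℝ) * I ^ 2) = (1 / N) * I ^ 2 := by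
      field_simp
    linarith
end

section
/- Let μ be a measure on X, u measurable, q_1,…,q_N strictly positive densities with ∫ q_n dμ = 1, and I = ∫ u dμ. For a tuple j = (j_1,…,j_N) ∈ {1,…,N}^N, set q̄_j = (1/N)∑_{n=1}^N q_{j_n} and W(j) = (1/N)∫ u²/q̄_j dμ − (1/N²)∑_{n=1}^N (∫ (u/q̄_j) q_{j_n} dμ)². Then for every j, W(j) ≤ (1/N²)∑_{n=1}^N ∫ u²/q_{j_n} dμ − (1/N)I². -/
open MeasureTheory

theorem stmt_10 {X : Type*} [MeasurableSpace X] (μ : Measure X) (N : ℕ) (hN : 1 ≤ N)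
    (u : X → ℝ) (hu : Measurable u) (huint : Integrable u μ)
    (q : Fin N → X → ℝ)
    (hqmeas : ∀ n, Measurable (q n))
    (hqpos : ∀ n, ∀ x, 0 < q n x)
    (hqint : ∀ n, ∫ x, q n x ∂μ = 1)
    (I : ℝ) (hI : I = ∫ x, u x ∂μ)
    (j : Fin N → Fin N)
    (qbar : X → ℝ) (hqbar : qbar = fun x => (1 / (N : ℝ)) * ∑ n, q (j n) x)
    (hint1 : Integrable (fun x => (u x) ^ 2 / qbar x) μ)
    (hint2 : ∀ n, Integrable (fun x => (u x / qbar x) * q (j n) x) μ)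
    (hint3 : ∀ n, Integrable (fun x => (u x) ^ 2 / q n x) μ)
    (W : ℝ)
    (hW : W = (1 / (N : ℝ)) * ∫ x, (u x) ^ 2 / qbar x ∂μ
        - (1 / (N : ℝ) ^ 2) * ∑ n, (∫ x, (u x / qbar x) * q (j n) x ∂μ) ^ 2) :
    W ≤ (1 / (N : ℝ) ^ 2) * (∑ n, ∫ x, (u x) ^ 2 / q (j n) x ∂μ)
        - (1 / (N : ℝ)) * I ^ 2 := by
  have hNpos : (0 : ℝ) < N := by exact_mod_cast hN
  haveI : Nonempty (Fin N) := ⟨⟨0, hN⟩⟩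
  -- positivity of qbar
  have hSpos : ∀ x, 0 < ∑ n, q (j n) x := fun x =>
    Finset.sum_pos (fun n _ => hqpos (j n) x) Finset.univ_nonempty
  have hqbarpos : ∀ x, 0 < qbar x := by
    intro x; rw [hqbar]; exact mul_pos (by positivity) (hSpos x)
  -- Step A: pointwise AM-HM
  have hptwise : ∀ x, (u x) ^ 2 / qbar x ≤ (1 / (N : ℝ)) * ∑ n, (u x) ^ 2 / q (j n) x := by
    intro x
    set a : Fin N → ℝ := fun n => q (j n) x with ha
    have hapos : ∀ n, 0 < a n := fun n => hqpos (j n) x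
    have hS : 0 < ∑ n, a n := hSpos x
    have hT : 0 < ∑ n, (a n)⁻¹ := Finset.sum_pos (fun n _ => inv_pos.2 (hapos n)) Finset.univ_nonempty
    have hCS : (N : ℝ) ^ 2 ≤ (∑ n, a n) * ∑ n, (a n)⁻¹ := by
      have := Finset.sum_mul_sq_le_sq_mul_sq Finset.univ
        (fun n => Real.sqrt (a n)) (fun n => (Real.sqrt (a n))⁻¹)
      have h1 : ∀ n : Fin N, Real.sqrt (a n) * (Real.sqrt (a n))⁻¹ = 1 := fun n =>
        mul_inv_cancel₀ (Real.sqrt_pos.2 (hapos n)).ne'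
      have h2 : ∀ n : Fin N, Real.sqrt (a n) ^ 2 = a n := fun n => Real.sq_sqrt (hapos n).le
      have h3 : ∀ n : Fin N, (Real.sqrt (a n))⁻¹ ^ 2 = (a n)⁻¹ := fun n => by
        rw [inv_pow, Real.sq_sqrt (hapos n).le]
      simpa [h1, h2, h3, Finset.card_univ] using this
    have hinv : (qbar x)⁻¹ ≤ (1 / (N : ℝ)) * ∑ n, (a n)⁻¹ := by
      rw [hqbar]
      simp only
      rw [mul_inv, one_div, inv_inv]
      calc (N : ℝ) * (∑ n, q (j n) x)⁻¹ = (N : ℝ) / (∑ n, a n) := by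
            rw [div_eq_mul_inv]
        _ ≤ (∑ n, (a n)⁻¹) / (N : ℝ) := by
            rw [div_le_div_iff₀ hS hNpos]; nlinarith [hCS]
        _ = (↑N)⁻¹ * ∑ n, (a n)⁻¹ := by rw [div_eq_inv_mul]
    have hu2 : (0 : ℝ) ≤ (u x) ^ 2 := sq_nonneg _
    calc (u x) ^ 2 / qbar x = (u x) ^ 2 * (qbar x)⁻¹ := by rw [div_eq_mul_inv]
      _ ≤ (u x) ^ 2 * ((1 / (N : ℝ)) * ∑ n, (a n)⁻¹) := by
          exact mul_le_mul_of_nonneg_left hinv hu2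
      _ = (1 / (N : ℝ)) * ∑ n, (u x) ^ 2 / a n := by
          simp_rw [div_eq_mul_inv, Finset.mul_sum]
          refine Finset.sum_congr rfl fun n _ => ?_
          ring
  -- integral of step A
  have hintA : ∫ x, (u x) ^ 2 / qbar x ∂μ ≤ (1 / (N : ℝ)) * ∑ n, ∫ x, (u x) ^ 2 / q (j n) x ∂μ := by
    have hintg : Integrable (fun x => (1 / (N : ℝ)) * ∑ n, (u x) ^ 2 / q (j n) x) μ :=
      (integrable_finset_sum Finset.univ (fun n _ => hint3 (j n))).const_mul _
    calc ∫ x, (u x) ^ 2 / qbar x ∂μ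
        ≤ ∫ x, (1 / (N : ℝ)) * ∑ n, (u x) ^ 2 / q (j n) x ∂μ :=
          integral_mono hint1 hintg (fun x => hptwise x)
      _ = (1 / (N : ℝ)) * ∑ n, ∫ x, (u x) ^ 2 / q (j n) x ∂μ := by
          rw [integral_const_mul, integral_finset_sum Finset.univ (fun n _ => hint3 (j n))]
  -- Step B: sum of the integrals equals N * I
  have hsumI : ∑ n, ∫ x, (u x / qbar x) * q (j n) x ∂μ = (N : ℝ) * I := by
    rw [← integral_finset_sum Finset.univ (fun n _ => hint2 n)]
    have : ∀ x, ∑ n, (u x / qbar x) * q (j n) x = (N : ℝ) * u x := by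
      intro x
      rw [← Finset.mul_sum]
      have hsq : ∑ n, q (j n) x = (N : ℝ) * qbar x := by
        rw [hqbar]; field_simp
      have h0 : qbar x ≠ 0 := (hqbarpos x).ne'
      rw [hsq]
      field_simp
    simp_rw [this]
    rw [integral_const_mul, ← hI]
  -- Step B': Cauchy-Schwarz on sums
  have hB : (N : ℝ) * I ^ 2 ≤ ∑ n, (∫ x, (u x / qbar x) * q (j n) x ∂μ) ^ 2 := by
    set b : Fin N → ℝ := fun n => ∫ x, (u x / qbar x) * q (j n) x ∂μ
    have := Finset.sum_mul_sq_le_sq_mul_sq Finset.univ (fun _ : Fin N => (1 : ℝ)) b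
    simp only [one_mul, one_pow, Finset.sum_const, Finset.card_univ, Fintype.card_fin,
      nsmul_eq_mul] at this
    have hb : (∑ n, b n) ^ 2 = ((N : ℝ) * I) ^ 2 := by rw [hsumI]
    nlinarith [this, sq_nonneg I]
  -- combine
  rw [hW]
  have hNN : (0 : ℝ) < (N : ℝ) ^ 2 := by positivity
  have h1 : (1 / (N : ℝ)) * ∫ x, (u x) ^ 2 / qbar x ∂μ
      ≤ (1 / (N : ℝ) ^ 2) * (∑ n, ∫ x, (u x) ^ 2 / q (j n) x ∂μ) := by
    have := mul_le_mul_of_nonneg_left hintA (le_of_lt (one_div_pos.2 hNpos))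
    calc (1 / (N : ℝ)) * ∫ x, (u x) ^ 2 / qbar x ∂μ
        ≤ (1 / (N : ℝ)) * ((1 / (N : ℝ)) * ∑ n, ∫ x, (u x) ^ 2 / q (j n) x ∂μ) := this
      _ = (1 / (N : ℝ) ^ 2) * (∑ n, ∫ x, (u x) ^ 2 / q (j n) x ∂μ) := by ring
  have h2 : (1 / (N : ℝ)) * I ^ 2
      ≤ (1 / (N : ℝ) ^ 2) * ∑ n, (∫ x, (u x / qbar x) * q (j n) x ∂μ) ^ 2 := by
    have := mul_le_mul_of_nonneg_left hB (le_of_lt (one_div_pos.2 hNN))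
    calc (1 / (N : ℝ)) * I ^ 2 = (1 / (N : ℝ) ^ 2) * ((N : ℝ) * I ^ 2) := by
          field_simp
      _ ≤ (1 / (N : ℝ) ^ 2) * ∑ n, (∫ x, (u x / qbar x) * q (j n) x ∂μ) ^ 2 := this
  linarith
end

section
/- Let μ, u, q_1,…,q_N, I, q̄_j, W(j) be as in the setting of multiple importance sampling with replacement. Then the average (1/N^N) ∑_{j ∈ {1,…,N}^N} W(j) ≤ (1/N²) ∑_{n=1}^N ∫ u²/q_n dμ − (1/N) I². -/
open MeasureTheory Finset

lemma eval_sum_aux {N : ℕ} (g : Fin N → ℝ) (n : Fin N) :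
    ∑ j : Fin N → Fin N, g (j n)
      = (Fintype.card ({m : Fin N // m ≠ n} → Fin N) : ℝ) * ∑ k, g k := by
  rw [← Equiv.sum_comp (Equiv.piSplitAt n fun _ => Fin N).symm (fun j => g (j n))]
  have h : ∀ p : Fin N × ({m : Fin N // m ≠ n} → Fin N),
      ((Equiv.piSplitAt n fun _ => Fin N).symm p) n = p.1 := by
    intro p; simp [Equiv.piSplitAt_symm_apply]
  simp_rw [h]
  rw [Fintype.sum_prod_type_right]
  simp [Finset.sum_const, Finset.card_univ, mul_comm]

lemma card_aux {N : ℕ} (hN : 1 ≤ N) (n : Fin N) :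
    (N : ℝ) * (Fintype.card ({m : Fin N // m ≠ n} → Fin N) : ℝ) = (N : ℝ) ^ N := by
  have h1 : Fintype.card {m : Fin N // m ≠ n} = N - 1 := by
    have := Fintype.card_subtype_compl (fun m : Fin N => m = n)
    simpa using this
  rw [Fintype.card_fun, h1, Fintype.card_fin]
  push_cast
  rw [← pow_succ']
  congr 1
  omega

/-- Theorem 3 of the paper: var(Î_R2) ≤ var(Î_R1). -/
theorem stmt_11 {X : Type*} [MeasurableSpace X] (μ : Measure X) (N : ℕ) (hN : 1 ≤ N)
    (u : X → ℝ) (hu : Measurable u) (huint : Integrable u μ)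
    (q : Fin N → X → ℝ)
    (hqmeas : ∀ n, Measurable (q n))
    (hqpos : ∀ n, ∀ x, 0 < q n x)
    (hqint : ∀ n, ∫ x, q n x ∂μ = 1)
    (I : ℝ) (hI : I = ∫ x, u x ∂μ)
    (qbar : (Fin N → Fin N) → X → ℝ)
    (hqbar : ∀ j, qbar j = fun x => (1 / (N : ℝ)) * ∑ n, q (j n) x)
    (hint1 : ∀ j, Integrable (fun x => (u x) ^ 2 / qbar j x) μ)
    (hint2 : ∀ j, ∀ n, Integrable (fun x => (u x / qbar j x) * q (j n) x) μ)
    (hint3 : ∀ n, Integrable (fun x => (u x) ^ 2 / q n x) μ)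
    (W : (Fin N → Fin N) → ℝ)
    (hW : ∀ j, W j = (1 / (N : ℝ)) * ∫ x, (u x) ^ 2 / qbar j x ∂μ
        - (1 / (N : ℝ) ^ 2) * ∑ n, (∫ x, (u x / qbar j x) * q (j n) x ∂μ) ^ 2) :
    (1 / (N : ℝ) ^ N) * ∑ j : Fin N → Fin N, W j
      ≤ (1 / (N : ℝ) ^ 2) * (∑ n, ∫ x, (u x) ^ 2 / q n x ∂μ)
        - (1 / (N : ℝ)) * I ^ 2 := by
  have hNR : (0 : ℝ) < (N : ℝ) := by exact_mod_cast hN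
  have hqbarpos : ∀ j x, 0 < qbar j x := by
    intro j x
    rw [hqbar j]
    have : 0 < ∑ n, q (j n) x :=
      Finset.sum_pos (fun n _ => hqpos (j n) x) (by simp [Finset.univ_nonempty_iff, ← Fin.pos_iff_nonempty]; omega)
    positivity
  -- Fact 1 : sum of the weighted integrals is N * I
  have fact1 : ∀ j, ∑ n, ∫ x, (u x / qbar j x) * q (j n) x ∂μ = (N : ℝ) * I := by
    intro j
    rw [← integral_finset_sum _ (fun n _ => hint2 j n)]
    have : ∀ x, ∑ n, (u x / qbar j x) * q (j n) x = (N : ℝ) * u x := by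
      intro x
      rw [← Finset.mul_sum]
      have hsum : ∑ n, q (j n) x = (N : ℝ) * qbar j x := by
        rw [hqbar j]; field_simp
      rw [hsum]
      field_simp [(hqbarpos j x).ne']
    simp_rw [this]
    rw [integral_const_mul, hI]
  -- Fact 2 : per-tuple second term bound
  have fact2 : ∀ j, W j ≤ (1 / (N : ℝ)) * ∫ x, (u x) ^ 2 / qbar j x ∂μ
      - (1 / (N : ℝ)) * I ^ 2 := by
    intro j
    rw [hW j]
    have cs : ((N : ℝ) * I) ^ 2 / (N : ℝ)
        ≤ ∑ n, (∫ x, (u x / qbar j x) * q (j n) x ∂μ) ^ 2 := by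
      have := Finset.sq_sum_div_le_sum_sq_div Finset.univ
        (fun n => ∫ x, (u x / qbar j x) * q (j n) x ∂μ)
        (g := fun _ : Fin N => (1 : ℝ)) (fun _ _ => one_pos)
      simpa [fact1 j, Finset.sum_const, Fintype.card_fin] using this
    have h2 : (1 / (N : ℝ)) * I ^ 2
        ≤ (1 / (N : ℝ) ^ 2) * ∑ n, (∫ x, (u x / qbar j x) * q (j n) x ∂μ) ^ 2 := by
      have h3 : ((N : ℝ) * I) ^ 2 / (N : ℝ) = (N : ℝ) * I ^ 2 := by
        field_simp
      rw [h3] at cs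
      have h4 : (1 / (N : ℝ) ^ 2) * ((N : ℝ) * I ^ 2)
          ≤ (1 / (N : ℝ) ^ 2) * ∑ n, (∫ x, (u x / qbar j x) * q (j n) x ∂μ) ^ 2 :=
        mul_le_mul_of_nonneg_left cs (by positivity)
      have h5 : (1 / (N : ℝ)) * I ^ 2 = (1 / (N : ℝ) ^ 2) * ((N : ℝ) * I ^ 2) := by
        field_simp
      linarith
    linarith
  -- Fact 3 : ∫ u²/qbar j ≤ (1/N) ∑ₙ ∫ u²/q (j n)
  have fact3 : ∀ j, ∫ x, (u x) ^ 2 / qbar j x ∂μ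
      ≤ (1 / (N : ℝ)) * ∑ n, ∫ x, (u x) ^ 2 / q (j n) x ∂μ := by
    intro j
    have hrhsint : Integrable (fun x => (1 / (N : ℝ)) * ∑ n, (u x) ^ 2 / q (j n) x) μ :=
      (integrable_finset_sum _ (fun n _ => hint3 (j n))).const_mul _
    have hpt : ∀ x, (u x) ^ 2 / qbar j x ≤ (1 / (N : ℝ)) * ∑ n, (u x) ^ 2 / q (j n) x := by
      intro x
      have sed : (∑ _n : Fin N, u x) ^ 2 / (∑ n, q (j n) x)
          ≤ ∑ n, (u x) ^ 2 / q (j n) x :=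
        Finset.sq_sum_div_le_sum_sq_div Finset.univ (fun _ => u x)
          (fun n _ => hqpos (j n) x)
      have hs : (∑ _n : Fin N, u x) = (N : ℝ) * u x := by
        simp [Finset.sum_const, Fintype.card_fin, mul_comm]
      rw [hs] at sed
      have hq : qbar j x = (1 / (N : ℝ)) * ∑ n, q (j n) x := by rw [hqbar j]
      have hne : Nonempty (Fin N) := ⟨⟨0, Nat.lt_of_lt_of_le Nat.zero_lt_one hN⟩⟩
      have hspos : 0 < ∑ n, q (j n) x :=
        Finset.sum_pos (fun n _ => hqpos (j n) x) Finset.univ_nonempty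
      rw [hq]
      have : (u x) ^ 2 / ((1 / (N : ℝ)) * ∑ n, q (j n) x)
          = (1 / (N : ℝ)) * (((N : ℝ) * u x) ^ 2 / ∑ n, q (j n) x) := by
        field_simp
        try ring
      rw [this]
      have h1N : (0 : ℝ) < 1 / (N : ℝ) := by positivity
      exact mul_le_mul_of_nonneg_left sed h1N.le
    calc ∫ x, (u x) ^ 2 / qbar j x ∂μ
        ≤ ∫ x, (1 / (N : ℝ)) * ∑ n, (u x) ^ 2 / q (j n) x ∂μ :=
          integral_mono (hint1 j) hrhsint hpt
      _ = (1 / (N : ℝ)) * ∑ n, ∫ x, (u x) ^ 2 / q (j n) x ∂μ := by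
          rw [integral_const_mul, integral_finset_sum _ (fun n _ => hint3 (j n))]
  -- combine per-tuple
  have key : ∀ j, W j ≤ (1 / (N : ℝ) ^ 2) * ∑ n, ∫ x, (u x) ^ 2 / q (j n) x ∂μ
      - (1 / (N : ℝ)) * I ^ 2 := by
    intro j
    have := fact2 j
    have h3 := fact3 j
    have : W j ≤ (1 / (N : ℝ)) * ((1 / (N : ℝ)) * ∑ n, ∫ x, (u x) ^ 2 / q (j n) x ∂μ)
        - (1 / (N : ℝ)) * I ^ 2 := by
      have := mul_le_mul_of_nonneg_left h3 (by positivity : (0:ℝ) ≤ 1 / (N : ℝ))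
      linarith [fact2 j]
    calc W j ≤ _ := this
      _ = (1 / (N : ℝ) ^ 2) * ∑ n, ∫ x, (u x) ^ 2 / q (j n) x ∂μ
          - (1 / (N : ℝ)) * I ^ 2 := by ring
  -- sum over all tuples
  set S := ∑ n, ∫ x, (u x) ^ 2 / q n x ∂μ with hS
  have hsumbound : ∑ j : Fin N → Fin N, W j
      ≤ (N : ℝ) ^ N * ((1 / (N : ℝ) ^ 2) * S - (1 / (N : ℝ)) * I ^ 2) := by
    calc ∑ j : Fin N → Fin N, W j
        ≤ ∑ j : Fin N → Fin N, ((1 / (N : ℝ) ^ 2) * ∑ n, ∫ x, (u x) ^ 2 / q (j n) x ∂μ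
            - (1 / (N : ℝ)) * I ^ 2) := Finset.sum_le_sum (fun j _ => key j)
      _ = (1 / (N : ℝ) ^ 2) * ∑ j : Fin N → Fin N, ∑ n, (∫ x, (u x) ^ 2 / q (j n) x ∂μ)
            - (N : ℝ) ^ N * ((1 / (N : ℝ)) * I ^ 2) := by
          rw [Finset.sum_sub_distrib, ← Finset.mul_sum, Finset.sum_const]
          simp only [Fintype.card_fun, Fintype.card_fin, Finset.card_univ, nsmul_eq_mul]
          push_cast
          ring
      _ = (N : ℝ) ^ N * ((1 / (N : ℝ) ^ 2) * S - (1 / (N : ℝ)) * I ^ 2) := by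
          have hswap : ∑ j : Fin N → Fin N, ∑ n, (∫ x, (u x) ^ 2 / q (j n) x ∂μ)
              = (N : ℝ) ^ N * S := by
            rw [Finset.sum_comm]
            have : ∀ n : Fin N, ∑ j : Fin N → Fin N, (∫ x, (u x) ^ 2 / q (j n) x ∂μ)
                = (Fintype.card ({m : Fin N // m ≠ n} → Fin N) : ℝ) * S :=
              fun n => eval_sum_aux (fun k => ∫ x, (u x) ^ 2 / q k x ∂μ) n
            simp_rw [this]
            rw [← Finset.sum_mul]
            have hc : ∀ n : Fin N,
                (Fintype.card ({m : Fin N // m ≠ n} → Fin N) : ℝ) = (N : ℝ) ^ N / (N : ℝ) := by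
              intro n
              rw [eq_div_iff hNR.ne', mul_comm]
              exact card_aux hN n
            simp_rw [hc]
            rw [Finset.sum_const, Finset.card_univ, Fintype.card_fin, nsmul_eq_mul]
            field_simp
            try ring
          rw [hswap]; ring
  have hpow : (0 : ℝ) < (N : ℝ) ^ N := by positivity
  calc (1 / (N : ℝ) ^ N) * ∑ j : Fin N → Fin N, W j
      ≤ (1 / (N : ℝ) ^ N) * ((N : ℝ) ^ N * ((1 / (N : ℝ) ^ 2) * S - (1 / (N : ℝ)) * I ^ 2)) :=
        mul_le_mul_of_nonneg_left hsumbound (by positivity)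
    _ = (1 / (N : ℝ) ^ 2) * S - (1 / (N : ℝ)) * I ^ 2 := by
        field_simp
end

section
/- Let μ be a measure, ψ a strictly positive measurable density, and q_1,…,q_N nonnegative measurable functions with (1/N)∑_{n=1}^N q_n = ψ μ-almost everywhere. Then for integrable u with I = ∫ u dμ: (1/N)∫ u²/ψ dμ − (1/N²)∑_{n=1}^N (∫(u/ψ)q_n dμ)² ≤ (1/N)∫ u²/ψ dμ − (1/N)I². -/
open MeasureTheory

theorem stmt_17 {X : Type*} [MeasurableSpace X] (μ : Measure X) (N : ℕ) (hN : 1 ≤ N)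
    (ψ : X → ℝ) (hψmeas : Measurable ψ) (hψpos : ∀ x, 0 < ψ x)
    (q : ℕ → X → ℝ)
    (hqmeas : ∀ n ∈ Finset.range N, Measurable (q n))
    (hqnonneg : ∀ n ∈ Finset.range N, ∀ x, 0 ≤ q n x)
    (hψq : ∀ᵐ x ∂μ, (1 / (N : ℝ)) * ∑ n ∈ Finset.range N, q n x = ψ x)
    (u : X → ℝ) (hu : Integrable u μ) (I : ℝ) (hI : I = ∫ x, u x ∂μ)
    (hint : ∀ n ∈ Finset.range N, Integrable (fun x => (u x / ψ x) * q n x) μ) :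
    (1 / (N : ℝ)) * ∫ x, (u x) ^ 2 / ψ x ∂μ
        - (1 / (N : ℝ) ^ 2) * ∑ n ∈ Finset.range N, (∫ x, (u x / ψ x) * q n x ∂μ) ^ 2
      ≤ (1 / (N : ℝ)) * ∫ x, (u x) ^ 2 / ψ x ∂μ - (1 / (N : ℝ)) * I ^ 2 := by
  have hNpos : (0 : ℝ) < N := by exact_mod_cast hN
  set a : ℕ → ℝ := fun n => ∫ x, (u x / ψ x) * q n x ∂μ with ha
  have hsum : ∑ n ∈ Finset.range N, a n = N * I := by
    rw [← integral_finset_sum _ (fun n hn => hint n hn)]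
    have : (fun x => ∑ n ∈ Finset.range N, (u x / ψ x) * q n x)
        =ᵐ[μ] fun x => (N : ℝ) * u x := by
      filter_upwards [hψq] with x hx
      rw [← Finset.mul_sum]
      have hsq : ∑ n ∈ Finset.range N, q n x = N * ψ x := by
        field_simp at hx; linarith [hx]
      rw [hsq]
      field_simp [(hψpos x).ne']
    rw [integral_congr_ae this, integral_const_mul, hI]
  have key : (N : ℝ) * I ^ 2 ≤ ∑ n ∈ Finset.range N, a n ^ 2 := by
    have := sq_sum_le_card_mul_sum_sq (s := Finset.range N) (f := a)
    rw [hsum, Finset.card_range] at this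
    have h2 : (N : ℝ) ^ 2 * I ^ 2 ≤ N * ∑ n ∈ Finset.range N, a n ^ 2 := by
      calc (N:ℝ)^2 * I^2 = ((N:ℝ)*I)^2 := by ring
        _ ≤ _ := this
    nlinarith
  have : (1 / (N : ℝ)) * I ^ 2 ≤ (1 / (N : ℝ) ^ 2) * ∑ n ∈ Finset.range N, a n ^ 2 := by
    rw [div_mul_eq_mul_div, div_mul_eq_mul_div, div_le_div_iff₀ hNpos (by positivity)]
    nlinarith
  linarith
end
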